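/- In O(U_q(2)) with central unitary u and standard SU_q(2) generators α, γ (relations αγ = qγα, αγ* = qγ*α, γγ* = γ*γ, α*α + γγ* = 1, αα* + q²γγ* = 1), for 0 ≤ s ≤ 1 the elements ξ = (1−s²)γγ* + s(γαu + α*γ*u*) and ζ = (1−s²)αγ* + s(α²u − qγ*²u*) satisfy ξ* = ξ, ζξ = q²ξζ, ζζ* = (s² + q²ξ)(1 − q²ξ), and ζ*ζ = (s² + ξ)(1 − ξ). -/

import Mathlib

/-!
Each identity is checked by bringing both sides to normal order. Moving `u, u*` to the front
(they are central) and cancelling `uu*`, pushing `α` and `α*` to the right past `γ, γ*` (for `α*`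
this costs a factor `q⁻¹`, which is why `q ≠ 0` is needed), ordering `γγ*`, and replacing `α*α`
by `1 - γγ*` and `αα*` by `1 - q²γγ*`, every product becomes a combination of words
`uⁱ γᵇ γ*ᶜ αᵈ`, `uⁱ γᵇ γ*ᶜ α*ᵈ` (with `u⁻¹ = u*` for `i < 0`). Both sides then have the same
coefficients, as rational functions of `q` and `s`.
-/

variable {A : Type*} [Ring A] [Algebra ℂ A] [StarRing A]

structure IsSUq2 (q : ℝ) (α γ : A) : Prop where
  alpha_mul_gamma : α * γ = (q : ℂ) • (γ * α)
  alpha_mul_star_gamma : α * star γ = (q : ℂ) • (star γ * α)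
  commute_gamma_star : Commute γ (star γ)
  star_alpha_mul_alpha_add : star α * α + γ * star γ = 1
  alpha_mul_star_alpha_add : α * star α + ((q : ℂ) ^ 2) • (γ * star γ) = 1

structure IsUq2 (q : ℝ) (u α γ : A) : Prop extends IsSUq2 q α γ where
  u_central : ∀ x, Commute u x
  u_mem_unitary : u ∈ unitary A

def podlesXi (s : ℝ) (u α γ : A) : A :=
  (1 - (s : ℂ) ^ 2) • (γ * star γ) + (s : ℂ) • (γ * α * u + star α * star γ * star u)

def podlesZeta (q s : ℝ) (u α γ : A) : A :=
  (1 - (s : ℂ) ^ 2) • (α * star γ) + (s : ℂ) • (α ^ 2 * u - (q : ℂ) • (star γ ^ 2 * star u))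

namespace IsSUq2

variable {q : ℝ} {α γ : A}

theorem star_alpha_mul_alpha (h : IsSUq2 q α γ) : star α * α = 1 - γ * star γ :=
  eq_sub_of_add_eq h.star_alpha_mul_alpha_add

theorem alpha_mul_star_alpha (h : IsSUq2 q α γ) :
    α * star α = 1 - ((q : ℂ) ^ 2) • (γ * star γ) :=
  eq_sub_of_add_eq h.alpha_mul_star_alpha_add

variable [StarModule ℂ A]

theorem star_gamma_mul_star_alpha (h : IsSUq2 q α γ) :
    star γ * star α = (q : ℂ) • (star α * star γ) := by
  simpa [Complex.conj_ofReal] using congrArg star h.alpha_mul_gamma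

theorem gamma_mul_star_alpha (h : IsSUq2 q α γ) : γ * star α = (q : ℂ) • (star α * γ) := by
  simpa [Complex.conj_ofReal] using congrArg star h.alpha_mul_star_gamma

theorem star_alpha_mul_star_gamma (h : IsSUq2 q α γ) (hq : q ≠ 0) :
    star α * star γ = (q : ℂ)⁻¹ • (star γ * star α) := by
  rw [h.star_gamma_mul_star_alpha, inv_smul_smul₀ (by exact_mod_cast hq)]

theorem star_alpha_mul_gamma (h : IsSUq2 q α γ) (hq : q ≠ 0) :
    star α * γ = (q : ℂ)⁻¹ • (γ * star α) := by
  rw [h.gamma_mul_star_alpha, inv_smul_smul₀ (by exact_mod_cast hq)]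

/-- The normal-ordering rules as a `simp` set for right-associated words. -/
theorem reorder (h : IsSUq2 q α γ) (hq : q ≠ 0) :
    (α * γ = (q : ℂ) • (γ * α) ∧
      α * star γ = (q : ℂ) • (star γ * α) ∧
      star α * γ = (q : ℂ)⁻¹ • (γ * star α) ∧
      star α * star γ = (q : ℂ)⁻¹ • (star γ * star α) ∧
      star γ * γ = γ * star γ ∧
      star α * α = 1 - γ * star γ ∧
      α * star α = 1 - ((q : ℂ) ^ 2) • (γ * star γ)) ∧
    ∀ x : A,
      α * (γ * x) = (q : ℂ) • (γ * (α * x)) ∧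
      α * (star γ * x) = (q : ℂ) • (star γ * (α * x)) ∧
      star α * (γ * x) = (q : ℂ)⁻¹ • (γ * (star α * x)) ∧
      star α * (star γ * x) = (q : ℂ)⁻¹ • (star γ * (star α * x)) ∧
      star γ * (γ * x) = γ * (star γ * x) ∧
      star α * (α * x) = x - γ * (star γ * x) ∧
      α * (star α * x) = x - ((q : ℂ) ^ 2) • (γ * (star γ * x)) := by
  refine ⟨⟨h.alpha_mul_gamma, h.alpha_mul_star_gamma, h.star_alpha_mul_gamma hq,
    h.star_alpha_mul_star_gamma hq, h.commute_gamma_star.eq.symm, h.star_alpha_mul_alpha,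
    h.alpha_mul_star_alpha⟩, fun x => ?_⟩
  simp only [← mul_assoc, h.alpha_mul_gamma, h.alpha_mul_star_gamma, h.star_alpha_mul_gamma hq,
    h.star_alpha_mul_star_gamma hq, h.commute_gamma_star.eq, h.star_alpha_mul_alpha,
    h.alpha_mul_star_alpha, smul_mul_assoc, sub_mul, one_mul, and_self]

end IsSUq2

variable [StarModule ℂ A]

theorem reorder_of_central_unitary {M : Type*} [Monoid M] [StarMul M] {u : M}
    (hc : ∀ x, Commute u x) (hu : u ∈ unitary M) :
    (u * star u = 1 ∧ star u * u = 1 ∧ ∀ x, u * (star u * x) = x ∧ star u * (u * x) = x) ∧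
    ∀ y, (y * u = u * y ∧ y * star u = star u * y ∧
      ∀ x, y * (u * x) = u * (y * x) ∧ y * (star u * x) = star u * (y * x)) := by
  have hsc (x : M) : Commute (star u) x := by simpa using (hc (star x)).star_star
  refine ⟨⟨Unitary.mul_star_self_of_mem hu, Unitary.star_mul_self_of_mem hu, fun x => ⟨?_, ?_⟩⟩,
    fun y => ⟨(hc y).eq.symm, (hsc y).eq.symm, fun x => ⟨(hc y).symm.left_comm x,
      (hsc y).symm.left_comm x⟩⟩⟩
  · rw [← mul_assoc, Unitary.mul_star_self_of_mem hu, one_mul]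
  · rw [← mul_assoc, Unitary.star_mul_self_of_mem hu, one_mul]

theorem isSelfAdjoint_podlesXi {u : A} (hu : ∀ x, Commute u x) (s : ℝ) (α γ : A) :
    IsSelfAdjoint (podlesXi s u α γ) := by
  have hsu : Commute (star u) (star α * star γ) := by simpa using (hu (γ * α)).star_star
  simp only [IsSelfAdjoint, podlesXi, star_add, star_smul, star_mul, star_star, Complex.star_def,
    map_sub, map_one, map_pow, Complex.conj_ofReal, (hu _).eq, hsu.eq, add_comm (γ * α * u)]

namespace IsUq2

variable {q : ℝ} {u α γ : A}

theorem podlesZeta_mul_podlesXi (h : IsUq2 q u α γ) (hq : q ≠ 0) (s : ℝ) :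
    podlesZeta q s u α γ * podlesXi s u α γ =
      ((q : ℂ) ^ 2) • (podlesXi s u α γ * podlesZeta q s u α γ) := by
  have hq' : (q : ℂ) ≠ 0 := by exact_mod_cast hq
  simp only [podlesXi, podlesZeta, pow_two, mul_add, add_mul, mul_sub, sub_mul, smul_add, smul_sub,
    smul_smul, mul_smul_comm, smul_mul_assoc, mul_assoc, mul_one, one_mul,
    h.reorder hq, reorder_of_central_unitary h.u_central h.u_mem_unitary]
  match_scalars <;> field_simp
  all_goals ring

theorem podlesZeta_mul_star_self (h : IsUq2 q u α γ) (hq : q ≠ 0) (s : ℝ) :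
    podlesZeta q s u α γ * star (podlesZeta q s u α γ) =
      (((s : ℂ) ^ 2) • (1 : A) + ((q : ℂ) ^ 2) • podlesXi s u α γ) *
        (1 - ((q : ℂ) ^ 2) • podlesXi s u α γ) := by
  have hq' : (q : ℂ) ≠ 0 := by exact_mod_cast hq
  simp only [podlesXi, podlesZeta, pow_two, star_add, star_smul, star_mul, star_sub, star_star,
    Complex.star_def, Complex.conj_ofReal, mul_add, add_mul, mul_sub,
    sub_mul, smul_add, smul_sub, smul_smul, mul_smul_comm, smul_mul_assoc, mul_assoc, mul_one,
    one_mul, h.reorder hq, reorder_of_central_unitary h.u_central h.u_mem_unitary]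
  match_scalars <;> field_simp
  all_goals ring

theorem star_podlesZeta_mul_self (h : IsUq2 q u α γ) (hq : q ≠ 0) (s : ℝ) :
    star (podlesZeta q s u α γ) * podlesZeta q s u α γ =
      (((s : ℂ) ^ 2) • (1 : A) + podlesXi s u α γ) * (1 - podlesXi s u α γ) := by
  have hq' : (q : ℂ) ≠ 0 := by exact_mod_cast hq
  simp only [podlesXi, podlesZeta, pow_two, star_add, star_smul, star_mul, star_sub, star_star,
    Complex.star_def, Complex.conj_ofReal, mul_add, add_mul, mul_sub,
    sub_mul, smul_add, smul_sub, smul_smul, mul_smul_comm, smul_mul_assoc, mul_assoc, mul_one,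
    one_mul, h.reorder hq, reorder_of_central_unitary h.u_central h.u_mem_unitary]
  match_scalars <;> field_simp
  all_goals ring

end IsUq2

theorem stmt16 (U : Type) [Ring U] [Algebra ℂ U] [StarRing U] [StarModule ℂ U]
    (q s : ℝ) (hq : 0 < q ∧ q < 1)
    (u α γ : U)
    (hu_central : ∀ x : U, u * x = x * u)
    (hu_unitary : u * star u = 1 ∧ star u * u = 1)
    (h1 : α * γ = (q : ℂ) • (γ * α))
    (h2 : α * star γ = (q : ℂ) • (star γ * α))
    (h3 : γ * star γ = star γ * γ)
    (h4 : star α * α + γ * star γ = 1)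
    (h5 : α * star α + ((q : ℂ)^2) • (γ * star γ) = 1)
    (ξ ζ : U)
    (hξ : ξ = ((1 - (s : ℂ)^2)) • (γ * star γ) +
      (s : ℂ) • (γ * α * u + star α * star γ * star u))
    (hζ : ζ = ((1 - (s : ℂ)^2)) • (α * star γ) +
      (s : ℂ) • (α^2 * u - (q : ℂ) • ((star γ)^2 * star u))) :
    star ξ = ξ ∧
    ζ * ξ = ((q : ℂ)^2) • (ξ * ζ) ∧
    ζ * star ζ = (((s : ℂ)^2) • (1 : U) + ((q : ℂ)^2) • ξ) * (1 - ((q : ℂ)^2) • ξ) ∧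
    star ζ * ζ = (((s : ℂ)^2) • (1 : U) + ξ) * (1 - ξ) := by
  have h : IsUq2 q u α γ :=
    { alpha_mul_gamma := h1
      alpha_mul_star_gamma := h2
      commute_gamma_star := h3
      star_alpha_mul_alpha_add := h4
      alpha_mul_star_alpha_add := h5
      u_central := hu_central
      u_mem_unitary := Unitary.mem_iff.2 hu_unitary.symm }
  have hq0 : q ≠ 0 := hq.1.ne'
  subst hξ hζ
  exact ⟨(isSelfAdjoint_podlesXi h.u_central s α γ).star_eq, h.podlesZeta_mul_podlesXi hq0 s,
    h.podlesZeta_mul_star_self hq0 s, h.star_podlesZeta_mul_self hq0 s⟩
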